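/- For θ ∈ ℝ, c > 0, t > 0, the function p_θ(x,t) = (θt/(2cosh(θt)))·I₁((θ/c)√(c²t² - x²))/√(c²t² - x²) on |x| < ct satisfies ∫_{-ct}^{ct} p_θ(x,t) dx = 1 - 1/cosh(θt). -/

import Mathlib

/-!
On `|x| < ct` the power series of `I₁` makes `I₁((θ/c)√s)/√s` a power series in
`s = c²t² - x² ≥ 0`, so it can be integrated termwise. Integration by parts gives
`∫_{-a}^{a} (a² - x²)^k dx = 2^(2k+1) (k!)² a^(2k+1) / (2k+1)!`, after which the `k`-th term
becomes `(θt)^(2k+2) / ((2k+2)! cosh θt)`, and these terms sum to `(cosh θt - 1) / cosh θt`.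
-/

open MeasureTheory Real Set
open scoped Nat

theorem integral_sq_sub_sq_pow_succ (a : ℝ) (k : ℕ) :
    (2 * k + 3) * ∫ x in -a..a, (a ^ 2 - x ^ 2) ^ (k + 1) =
      (2 * k + 2) * a ^ 2 * ∫ x in -a..a, (a ^ 2 - x ^ 2) ^ k := by
  have hderiv : ∀ x ∈ uIcc (-a) a, HasDerivAt (fun x ↦ x * (a ^ 2 - x ^ 2) ^ (k + 1))
      ((2 * k + 3) * (a ^ 2 - x ^ 2) ^ (k + 1) - (2 * k + 2) * a ^ 2 * (a ^ 2 - x ^ 2) ^ k) x := by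
    intro x _
    refine ((hasDerivAt_id' x).fun_mul
      (((hasDerivAt_pow 2 x).const_sub (a ^ 2)).fun_pow (k + 1))).congr_deriv ?_
    push_cast [Nat.add_sub_cancel]
    ring
  have hFTC := intervalIntegral.integral_eq_sub_of_hasDerivAt hderiv
    (Continuous.intervalIntegrable (by fun_prop) _ _)
  rw [intervalIntegral.integral_sub (Continuous.intervalIntegrable (by fun_prop) _ _)
      (Continuous.intervalIntegrable (by fun_prop) _ _),
    intervalIntegral.integral_const_mul, intervalIntegral.integral_const_mul] at hFTC
  simp only [neg_sq, sub_self, zero_pow k.succ_ne_zero, mul_zero] at hFTC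
  linarith

theorem integral_sq_sub_sq_pow (a : ℝ) (k : ℕ) :
    ∫ x in -a..a, (a ^ 2 - x ^ 2) ^ k =
      2 ^ (2 * k + 1) * (k ! : ℝ) ^ 2 / (2 * k + 1)! * a ^ (2 * k + 1) := by
  induction k with
  | zero => norm_num [two_mul]
  | succ k ih =>
    have h3 : (2 * k + 3 : ℝ) ≠ 0 := by positivity
    rw [← mul_right_inj' h3, integral_sq_sub_sq_pow_succ, ih,
      show 2 * (k + 1) + 1 = (2 * k + 1) + 1 + 1 by ring]
    push_cast [Nat.factorial_succ]
    field_simp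
    ring

theorem hasSum_integral_tsum_mul_pow {a b : ℝ} (hab : a ≤ b) {g : ℝ → ℝ} (hg : Continuous g)
    (hg_nonneg : ∀ x ∈ Icc a b, 0 ≤ g x) {β : ℕ → ℝ}
    (hβ : Summable fun k ↦ β k * ∫ x in a..b, g x ^ k) :
    HasSum (fun k ↦ β k * ∫ x in a..b, g x ^ k) (∫ x in a..b, ∑' k, β k * g x ^ k) := by
  simp only [intervalIntegral.integral_of_le hab] at hβ ⊢
  have hint : ∀ k, IntegrableOn (fun x ↦ β k * g x ^ k) (Ioc a b) := fun k ↦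
    (Continuous.integrableOn_Icc (by fun_prop)).mono_set Ioc_subset_Icc_self
  have hnorm : ∀ k, ∫ x in Ioc a b, ‖β k * g x ^ k‖ = |β k * ∫ x in Ioc a b, g x ^ k| := by
    intro k
    have hpos : ∀ x ∈ Ioc a b, 0 ≤ g x ^ k :=
      fun x hx ↦ pow_nonneg (hg_nonneg x (Ioc_subset_Icc_self hx)) k
    rw [setIntegral_congr_fun measurableSet_Ioc fun x hx ↦ by
        rw [norm_mul, Real.norm_eq_abs, Real.norm_of_nonneg (hpos x hx)],
      integral_const_mul, abs_mul, abs_of_nonneg (setIntegral_nonneg measurableSet_Ioc hpos)]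
  simpa only [integral_const_mul] using hasSum_integral_of_summable_integral_norm hint
    ((summable_abs_iff.2 hβ).congr fun k ↦ (hnorm k).symm)

theorem tsum_besselI1_series_div_sqrt (κ : ℝ) {s : ℝ} (hs : 0 < s) :
    (∑' k : ℕ, (κ * √s / 2) ^ (2 * k + 1) / ((k ! : ℝ) * ((k + 1)! : ℝ))) / √s =
      ∑' k : ℕ, (κ / 2) ^ (2 * k + 1) / ((k ! : ℝ) * ((k + 1)! : ℝ)) * s ^ k := by
  rw [← tsum_div_const]
  refine tsum_congr fun k ↦ ?_
  have hsqrt : √s ≠ 0 := (sqrt_pos.2 hs).ne'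
  rw [mul_div_right_comm, mul_pow, pow_succ √s, pow_mul, sq_sqrt hs.le]
  field_simp

theorem besselI1_coeff_mul_integral_sq_sub_sq_pow (κ a : ℝ) (k : ℕ) :
    (κ / 2) ^ (2 * k + 1) / ((k ! : ℝ) * ((k + 1)! : ℝ)) *
        (2 ^ (2 * k + 1) * (k ! : ℝ) ^ 2 / (2 * k + 1)! * a ^ (2 * k + 1)) =
      2 * (κ * a) ^ (2 * k + 1) / (2 * k + 2)! := by
  rw [show 2 * k + 2 = (2 * k + 1) + 1 by ring]
  push_cast [Nat.factorial_succ, div_pow, mul_pow]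
  field_simp
  ring

theorem hasSum_pow_two_mul_add_two_div_factorial (u : ℝ) :
    HasSum (fun k : ℕ ↦ u ^ (2 * k + 2) / (2 * k + 2)!) (cosh u - 1) := by
  simpa [mul_add] using (hasSum_nat_add_iff' 1).2 (hasSum_cosh u)

/-- The density `p_θ(x,t) = (θt/(2cosh(θt))) I₁((θ/c)√(c²t²-x²))/√(c²t²-x²)`
integrates over `(-ct, ct)` to `1 - 1/cosh(θt)`. -/
theorem density_total_mass (θ c t : ℝ) (hc : 0 < c) (ht : 0 < t)
    (I1 : ℝ → ℝ)
    (hI1 : ∀ z : ℝ, I1 z = ∑' k : ℕ,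
      (z / 2) ^ (2 * k + 1) / ((Nat.factorial k : ℝ) * (Nat.factorial (k + 1) : ℝ))) :
    ∫ x in (-(c * t))..(c * t),
        θ * t / (2 * Real.cosh (θ * t))
          * (I1 (θ / c * Real.sqrt (c ^ 2 * t ^ 2 - x ^ 2))
              / Real.sqrt (c ^ 2 * t ^ 2 - x ^ 2))
      = 1 - 1 / Real.cosh (θ * t) := by
  have hct : 0 < c * t := mul_pos hc ht
  set β : ℕ → ℝ := fun k ↦
    θ * t / (2 * cosh (θ * t)) * ((θ / c / 2) ^ (2 * k + 1) / ((k ! : ℝ) * ((k + 1)! : ℝ)))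
  have hseries : EqOn (fun x ↦ θ * t / (2 * cosh (θ * t))
          * (I1 (θ / c * √(c ^ 2 * t ^ 2 - x ^ 2)) / √(c ^ 2 * t ^ 2 - x ^ 2)))
      (fun x ↦ ∑' k, β k * (c ^ 2 * t ^ 2 - x ^ 2) ^ k) (uIoo (-(c * t)) (c * t)) := by
    intro x hx
    rw [uIoo_of_le (by linarith)] at hx
    have hs : 0 < c ^ 2 * t ^ 2 - x ^ 2 := by nlinarith [hx.1, hx.2]
    simp only [β, hI1, tsum_besselI1_series_div_sqrt _ hs, mul_assoc, tsum_mul_left]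
  have hterm : ∀ k, β k * ∫ x in -(c * t)..c * t, (c ^ 2 * t ^ 2 - x ^ 2) ^ k =
      (θ * t) ^ (2 * k + 2) / (2 * k + 2)! / cosh (θ * t) := by
    intro k
    have hκa : θ / c * (c * t) = θ * t := by field_simp
    rw [← mul_pow, integral_sq_sub_sq_pow, mul_assoc, besselI1_coeff_mul_integral_sq_sub_sq_pow,
      hκa]
    field_simp
    ring
  have hsum := (hasSum_pow_two_mul_add_two_div_factorial (θ * t)).div_const (cosh (θ * t))
  simp only [← hterm] at hsum
  have hnonneg : ∀ x ∈ Icc (-(c * t)) (c * t), 0 ≤ c ^ 2 * t ^ 2 - x ^ 2 :=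
    fun x hx ↦ by nlinarith [hx.1, hx.2]
  rw [intervalIntegral.integral_congr_uIoo hseries,
    (hasSum_integral_tsum_mul_pow (by linarith) (by fun_prop) hnonneg hsum.summable).unique hsum]
  field_simp [(cosh_pos (θ * t)).ne']
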